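/- (Lemma 1, angle coverage) Suppose the focused directions satisfy θ_m = θ_t' + (f_c/f_m)(θ_p' + 2p_m) with p_m = p_{m+1} = p and θ_p' + 2p > 0, and the angle-domain 3 dB beam width at frequency f is η_θ^f = 0.88 f_c/(N_t f). Then the coverage condition |θ_{m+1} − θ_m| ≤ η_θ^{f_m} + η_θ^{f_{m+1}} holds if and only if θ_p' + 2p ≤ (0.88/N_t)(f_m + f_{m+1})/(f_{m+1} − f_m), where 0 < f_m < f_{m+1}. In particular, with f_{m+1} − f_m = B/M, the condition reads θ_p' + 2p ≤ (0.88/N_t)(f_m + f_{m+1}) M/B. -/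

import Mathlib

/-! Both the angular gap between the two focused directions and the sum of the two beamwidths
carry the factor `f_c / (f_m f_{m+1})`: the gap is `f_c (θ_p' + 2p) (1/f_m - 1/f_{m+1})` and the
beamwidths add up to `(0.88 f_c / N_t) (1/f_m + 1/f_{m+1})`. Cancelling it leaves the linear
condition `(θ_p' + 2p)(f_{m+1} - f_m) ≤ (0.88/N_t)(f_m + f_{m+1})`. -/

namespace AngleCoverage

variable {θ a c κ N f₀ f₁ : ℝ}

lemma abs_sub_focusedDirection (ha : 0 ≤ a) (hc : 0 ≤ c) (hf₀ : 0 < f₀) (hf : f₀ ≤ f₁) :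
    |(θ + c / f₁ * a) - (θ + c / f₀ * a)| = c / (f₀ * f₁) * (a * (f₁ - f₀)) := by
  have hf₁ : 0 < f₁ := hf₀.trans_le hf
  have hdir : c / f₁ ≤ c / f₀ := div_le_div_of_nonneg_left hc hf₀ hf
  rw [abs_of_nonpos (by nlinarith)]
  field_simp
  ring

lemma beamwidth_add (hN : N ≠ 0) (hf₀ : f₀ ≠ 0) (hf₁ : f₁ ≠ 0) :
    κ * c / (N * f₀) + κ * c / (N * f₁) = c / (f₀ * f₁) * (κ / N * (f₀ + f₁)) := by
  field_simp
  ring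

lemma abs_sub_focusedDirection_le_beamwidth_add_iff (ha : 0 ≤ a) (hc : 0 < c) (hN : 0 < N)
    (hf₀ : 0 < f₀) (hlt : f₀ < f₁) :
    |(θ + c / f₁ * a) - (θ + c / f₀ * a)| ≤ κ * c / (N * f₀) + κ * c / (N * f₁) ↔
      a ≤ κ / N * (f₀ + f₁) / (f₁ - f₀) := by
  have hf₁ : 0 < f₁ := hf₀.trans hlt
  rw [abs_sub_focusedDirection ha hc.le hf₀ hlt.le, beamwidth_add hN.ne' hf₀.ne' hf₁.ne',
    mul_le_mul_iff_right₀ (by positivity), le_div_iff₀ (sub_pos.2 hlt)]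

end AngleCoverage

open AngleCoverage in
theorem angle_coverage_condition_general (fc Nt θt' θp' B M : ℝ) (p : ℤ)
    (hfc : 0 < fc) (hNt : 0 < Nt)
    (hpos : 0 < θp' + 2 * p) (fm fm1 : ℝ) (hfm : 0 < fm) (hlt : fm < fm1) :
    (|(θt' + (fc / fm1) * (θp' + 2 * p)) - (θt' + (fc / fm) * (θp' + 2 * p))| ≤
        0.88 * fc / (Nt * fm) + 0.88 * fc / (Nt * fm1) ↔
      θp' + 2 * p ≤ (0.88 / Nt) * (fm + fm1) / (fm1 - fm)) ∧
    (fm1 - fm = B / M →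
      (|(θt' + (fc / fm1) * (θp' + 2 * p)) - (θt' + (fc / fm) * (θp' + 2 * p))| ≤
          0.88 * fc / (Nt * fm) + 0.88 * fc / (Nt * fm1) ↔
        θp' + 2 * p ≤ (0.88 / Nt) * (fm + fm1) * M / B)) := by
  have coverage := abs_sub_focusedDirection_le_beamwidth_add_iff (θ := θt') (κ := 0.88)
    hpos.le hfc hNt hfm hlt
  exact ⟨coverage, fun hBM => by rw [coverage, hBM, div_div_eq_mul_div]⟩

/-- Lemma 1 (angle coverage): with focused directions
`θ(f) = θ_t' + (f_c/f)(θ_p' + 2p)` (same integer `p` on both subcarriers,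
`θ_p' + 2p > 0`) and angle-domain 3 dB beamwidth `η_θ^f = 0.88 f_c/(N_t f)`,
the coverage condition `|θ_{m+1} − θ_m| ≤ η_θ^{f_m} + η_θ^{f_{m+1}}` holds
iff `θ_p' + 2p ≤ (0.88/N_t)(f_m + f_{m+1})/(f_{m+1} − f_m)`; and when
`f_{m+1} − f_m = B/M`, iff `θ_p' + 2p ≤ (0.88/N_t)(f_m + f_{m+1}) M/B`. -/
theorem angle_coverage_condition (fc Nt θt' θp' B M : ℝ) (p : ℤ)
    (hfc : 0 < fc) (hNt : 0 < Nt) (hB : 0 < B) (hM : 0 < M)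
    (hpos : 0 < θp' + 2 * p) (fm fm1 : ℝ) (hfm : 0 < fm) (hlt : fm < fm1) :
    (|(θt' + (fc / fm1) * (θp' + 2 * p)) - (θt' + (fc / fm) * (θp' + 2 * p))| ≤
        0.88 * fc / (Nt * fm) + 0.88 * fc / (Nt * fm1) ↔
      θp' + 2 * p ≤ (0.88 / Nt) * (fm + fm1) / (fm1 - fm)) ∧
    (fm1 - fm = B / M →
      (|(θt' + (fc / fm1) * (θp' + 2 * p)) - (θt' + (fc / fm) * (θp' + 2 * p))| ≤
          0.88 * fc / (Nt * fm) + 0.88 * fc / (Nt * fm1) ↔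
        θp' + 2 * p ≤ (0.88 / Nt) * (fm + fm1) * M / B)) :=
  angle_coverage_condition_general fc Nt θt' θp' B M p hfc hNt hpos fm fm1 hfm hlt
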